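/- arXiv:1011.3599 — 3 statements merged into one kernel-verified Lean document; each statement's English description precedes it below -/
import Mathlib

section
/- Fix p > 0 and n ≥ 1. Let S : ℝ → ℝ be a continuous function with S_t = S_0 for all t ≤ 0, bounded on bounded intervals, and for k = 0, …, n−1 define the Laguerre processes X^{p,k}_t = ∫₀^∞ L^p_k(v) S_{t−v} dv for t ≥ 0 (assuming these integrals converge). Then each X^{p,k} is differentiable in t and satisfies the system of ODEs d X^{p,k}_t / dt = √(2p) S_t − 2p Σ_{j=0}^{k−1} X^{p,j}_t − p X^{p,k}_t for every t ≥ 0 and every k = 0, …, n−1. -/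
open MeasureTheory Set

/-- The Laguerre polynomial `P_k(t) = ∑_{i=0}^k binom(k, k-i) (-t)^i / i!`. -/
noncomputable def lagPoly (k : ℕ) (t : ℝ) : ℝ :=
  ∑ i ∈ Finset.range (k + 1), (k.choose (k - i) : ℝ) * (-t) ^ i / (Nat.factorial i : ℝ)

/-- The scaled Laguerre function `L^p_k(t) = √(2p) P_k(2pt) e^{-pt}`. -/
noncomputable def lagFun (p : ℝ) (k : ℕ) (t : ℝ) : ℝ :=
  Real.sqrt (2 * p) * lagPoly k (2 * p * t) * Real.exp (-(p * t))

/-- The Laguerre process `X^{p,k}_t = ∫₀^∞ L^p_k(v) S_{t-v} dv`. -/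
noncomputable def lagProcess (p : ℝ) (k : ℕ) (S : ℝ → ℝ) (t : ℝ) : ℝ :=
  ∫ v in Ioi (0:ℝ), lagFun p k v * S (t - v)

/-! ### Auxiliary machinery -/

/-- The basic integrals `G_m(t) = ∫_{u ≤ t} u^m e^{pu} S u du`. -/
noncomputable def lagG (p : ℝ) (S : ℝ → ℝ) (m : ℕ) (t : ℝ) : ℝ :=
  ∫ u in Iic t, u ^ m * Real.exp (p * u) * S u

/-- Binomial combination of the `G_m`. -/
noncomputable def lagPsi (p : ℝ) (S : ℝ → ℝ) (i : ℕ) (t : ℝ) : ℝ :=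
  ∑ m ∈ Finset.range (i+1), ((i.choose m : ℝ) * (-1:ℝ)^m) * (t ^ (i - m) * lagG p S m t)

/-- Coefficients of the scaled Laguerre function as a combination of `x^i e^{-px}`. -/
noncomputable def lagC (p : ℝ) (k i : ℕ) : ℝ :=
  Real.sqrt (2 * p) * (k.choose (k - i) : ℝ) * (-(2*p))^i / (Nat.factorial i : ℝ)

lemma lagg_integrable (p : ℝ) (hp : 0 < p) (S : ℝ → ℝ) (hS_cont : Continuous S)
    (hS_conv : ∀ t ≤ (0:ℝ), S t = S 0) (j : ℕ) (t : ℝ) :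
    IntegrableOn (fun u => u ^ j * Real.exp (p * u) * S u) (Iic t) := by
  have hIio : IntegrableOn (fun u => u ^ j * Real.exp (p * u) * S u) (Iio t) := by
    have hemb : MeasurableEmbedding (fun v : ℝ => -v) := (Homeomorph.neg ℝ).measurableEmbedding
    have hmp : MeasurePreserving (fun v : ℝ => -v) (volume : Measure ℝ) volume :=
      Measure.measurePreserving_neg volume
    have hpre : (fun v : ℝ => -v) ⁻¹' (Ioi (-t)) = Iio t := by ext u; simp
    have key : IntegrableOn (fun v => (-v) ^ j * Real.exp (p * (-v)) * S (-v)) (Ioi (-t)) := by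
      apply integrable_of_isBigO_exp_neg (half_pos hp)
      · exact (((continuous_neg.pow j).mul
          ((Real.continuous_exp.comp (continuous_const.mul continuous_neg)))).mul
          (hS_cont.comp continuous_neg)).continuousOn
      · rw [Asymptotics.isBigO_iff]
        refine ⟨|S 0|, ?_⟩
        have hb := (isLittleO_pow_exp_pos_mul_atTop j (half_pos hp)).def one_pos
        filter_upwards [hb, Filter.eventually_ge_atTop (0:ℝ)] with v hv hv0
        have hSv : S (-v) = S 0 := hS_conv _ (by linarith)
        rw [hSv]
        simp only [Real.norm_eq_abs, one_mul, abs_mul, abs_pow, abs_neg, Real.abs_exp] at hv ⊢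
        calc |v| ^ j * Real.exp (p * -v) * |S 0|
            ≤ Real.exp (p/2*v) * Real.exp (p * -v) * |S 0| := by
              have : |v| ^ j ≤ Real.exp (p/2*v) := by
                calc |v| ^ j = |v ^ j| := (abs_pow v j).symm
                  _ ≤ Real.exp (p/2*v) := by simpa [Real.abs_exp] using hv
              gcongr
          _ = |S 0| * Real.exp (-(p/2) * v) := by
              rw [← Real.exp_add, show p/2*v + p * -v = -(p/2)*v by ring]; ring
    have := (hmp.integrableOn_comp_preimage hemb
      (f := fun v => (-v) ^ j * Real.exp (p * (-v)) * S (-v)) (s := Ioi (-t))).2 key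
    rw [hpre] at this
    simpa [Function.comp_def] using this
  rw [IntegrableOn, Measure.restrict_congr_set Iio_ae_eq_Iic] at hIio
  exact hIio

lemma lagG_hasDerivAt (p : ℝ) (S : ℝ → ℝ) (hS_cont : Continuous S) (m : ℕ) (t : ℝ)
    (hint : ∀ s : ℝ, IntegrableOn (fun u => u ^ m * Real.exp (p * u) * S u) (Iic s)) :
    HasDerivAt (lagG p S m) (t ^ m * Real.exp (p * t) * S t) t := by
  set g : ℝ → ℝ := fun u => u ^ m * Real.exp (p * u) * S u with hg
  have hg_cont : Continuous g :=
    ((continuous_pow m).mul (Real.continuous_exp.comp (continuous_const.mul continuous_id))).mul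
      hS_cont
  have hF : HasDerivAt (fun s => lagG p S m (t - 1) + ∫ x in (t-1)..s, g x) (g t) t := by
    apply HasDerivAt.const_add
    apply intervalIntegral.integral_hasDerivAt_right
    · refine ((hint t).mono_set ?_).intervalIntegrable
      intro x hx
      have : x ≤ max (t-1) t := hx.2
      simp only [mem_Iic]
      calc x ≤ max (t-1) t := this
        _ ≤ t := by simp
    · exact hg_cont.stronglyMeasurableAtFilter _ _
    · exact hg_cont.continuousAt
  have heq : ∀ᶠ s in nhds t, lagG p S m s = lagG p S m (t - 1) + ∫ x in (t-1)..s, g x := by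
    filter_upwards [Ioi_mem_nhds (show t - 1 < t by linarith)] with s hs
    have := intervalIntegral.integral_Iic_sub_Iic (hint (t-1)) (hint s)
    rw [lagG, lagG]
    linarith [this]
  exact (hF.congr_of_eventuallyEq heq)

lemma lagPsi_hasDerivAt (p : ℝ) (S : ℝ → ℝ) (t : ℝ)
    (hG : ∀ m, HasDerivAt (lagG p S m) (t ^ m * Real.exp (p * t) * S t) t) (i : ℕ) :
    HasDerivAt (lagPsi p S i)
      ((i:ℝ) * lagPsi p S (i-1) t + (0:ℝ)^i * (Real.exp (p*t) * S t)) t := by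
  have hsum : HasDerivAt (lagPsi p S i)
      (∑ m ∈ Finset.range (i+1), ((i.choose m : ℝ) * (-1:ℝ)^m) *
        ((((i - m : ℕ):ℝ) * t ^ (i - m - 1)) * lagG p S m t
          + t ^ (i - m) * (t ^ m * Real.exp (p * t) * S t))) t := by
    apply HasDerivAt.fun_sum
    intro m _
    exact ((hasDerivAt_pow (i - m) t).mul (hG m)).const_mul _
  convert hsum using 1
  rw [eq_comm]
  have hsplit : ∀ m ∈ Finset.range (i+1), ((i.choose m : ℝ) * (-1:ℝ)^m) *
        ((((i - m : ℕ):ℝ) * t ^ (i - m - 1)) * lagG p S m t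
          + t ^ (i - m) * (t ^ m * Real.exp (p * t) * S t))
      = ((i.choose m : ℝ) * (-1:ℝ)^m) * ((((i - m : ℕ):ℝ) * t ^ (i - m - 1)) * lagG p S m t)
        + ((-t) ^ m * t ^ (i - m) * (i.choose m : ℝ)) * (Real.exp (p * t) * S t) := by
    intro m _
    rw [neg_pow]
    ring
  rw [Finset.sum_congr rfl hsplit, Finset.sum_add_distrib, ← Finset.sum_mul, ← add_pow]
  rw [neg_add_cancel]
  congr 1
  rcases i with _ | n
  · simp
  · rw [Finset.sum_range_succ]
    simp only [Nat.sub_self, Nat.cast_zero, zero_mul, mul_zero, add_zero]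
    rw [Nat.add_sub_cancel, lagPsi, Finset.mul_sum]
    apply Finset.sum_congr rfl
    intro m hm
    rw [Finset.mem_range] at hm
    have hnat : (n + 1).choose m * (n + 1 - m) = (n + 1) * n.choose m := by
      have h2 := Nat.add_one_mul_choose_eq n m
      rw [← Nat.choose_succ_right_eq]
      exact h2.symm
    have hexp : n + 1 - m - 1 = n - m := by omega
    have hcast : ((n + 1).choose m : ℝ) * ((n + 1 - m : ℕ) : ℝ)
        = ((n + 1 : ℕ) : ℝ) * (n.choose m : ℝ) := by
      exact_mod_cast congrArg (Nat.cast : ℕ → ℝ) hnat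
    rw [hexp]
    have hc2 : ((n+1:ℕ) : ℝ) = (n:ℝ) + 1 := by push_cast; ring
    rw [hc2] at hcast
    linear_combination ((-1:ℝ)^m * t^(n-m) * lagG p S m t) * hcast
      - (t ^ (n - m) * lagG p S m t * (n.choose m : ℝ) * (-1:ℝ) ^ m) * hc2

lemma lagFun_eq (p : ℝ) (k : ℕ) (x : ℝ) :
    lagFun p k x = ∑ i ∈ Finset.range (k+1), lagC p k i * (x^i * Real.exp (-(p*x))) := by
  unfold lagFun lagPoly lagC
  rw [Finset.mul_sum, Finset.sum_mul]
  apply Finset.sum_congr rfl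
  intro i _
  rw [show -(2*p*x) = (-(2*p))*x by ring, mul_pow]
  ring

lemma monomial_point (p : ℝ) (S : ℝ → ℝ) (i : ℕ) (t u : ℝ) :
    (t-u)^i * Real.exp (-(p*(t-u))) * S u
      = ∑ m ∈ Finset.range (i+1),
          ((i.choose m : ℝ) * (-1:ℝ)^m * t^(i-m) * Real.exp (-(p*t)))
            * (u^m * Real.exp (p*u) * S u) := by
  rw [show t - u = -u + t by ring, add_pow, Finset.sum_mul, Finset.sum_mul]
  apply Finset.sum_congr rfl
  intro m _
  rw [show -(p*(-u+t)) = p*u + -(p*t) by ring, Real.exp_add, neg_pow]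
  ring

lemma monomial_integrable (p : ℝ) (S : ℝ → ℝ) (i : ℕ) (t : ℝ)
    (hint : ∀ m : ℕ, IntegrableOn (fun u => u ^ m * Real.exp (p * u) * S u) (Iic t)) :
    IntegrableOn (fun u => (t-u)^i * Real.exp (-(p*(t-u))) * S u) (Iic t) := by
  have : (fun u => (t-u)^i * Real.exp (-(p*(t-u))) * S u)
      = fun u => ∑ m ∈ Finset.range (i+1),
          ((i.choose m : ℝ) * (-1:ℝ)^m * t^(i-m) * Real.exp (-(p*t)))
            * (u^m * Real.exp (p*u) * S u) := funext (monomial_point p S i t)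
  rw [this]
  apply integrable_finset_sum
  intro m _
  exact (hint m).const_mul _

lemma monomial_integral (p : ℝ) (S : ℝ → ℝ) (i : ℕ) (t : ℝ)
    (hint : ∀ m : ℕ, IntegrableOn (fun u => u ^ m * Real.exp (p * u) * S u) (Iic t)) :
    ∫ u in Iic t, (t-u)^i * Real.exp (-(p*(t-u))) * S u
      = Real.exp (-(p*t)) * lagPsi p S i t := by
  rw [show (fun u => (t-u)^i * Real.exp (-(p*(t-u))) * S u)
      = fun u => ∑ m ∈ Finset.range (i+1),
          ((i.choose m : ℝ) * (-1:ℝ)^m * t^(i-m) * Real.exp (-(p*t)))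
            * (u^m * Real.exp (p*u) * S u) from funext (monomial_point p S i t)]
  rw [integral_finset_sum _ (fun m _ => (hint m).const_mul _)]
  rw [lagPsi, Finset.mul_sum]
  apply Finset.sum_congr rfl
  intro m _
  rw [integral_const_mul]
  show _ * lagG p S m t = _
  ring

lemma lagProcess_rep (p : ℝ) (S : ℝ → ℝ) (k : ℕ) (t : ℝ)
    (hint : ∀ m : ℕ, IntegrableOn (fun u => u ^ m * Real.exp (p * u) * S u) (Iic t)) :
    lagProcess p k S t
      = ∑ i ∈ Finset.range (k+1), lagC p k i * (Real.exp (-(p*t)) * lagPsi p S i t) := by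
  have hmp : MeasurePreserving (fun u : ℝ => t - u) volume volume :=
    Measure.measurePreserving_sub_left volume t
  have hemb : MeasurableEmbedding (fun u : ℝ => t - u) :=
    (MeasurableEquiv.subLeft t).measurableEmbedding
  have h := hmp.setIntegral_preimage_emb hemb (fun v => lagFun p k v * S (t - v)) (Ioi 0)
  have hpre : (fun u : ℝ => t - u) ⁻¹' (Ioi 0) = Iio t := by ext u; simp [sub_pos]
  rw [hpre] at h
  have h2 : lagProcess p k S t = ∫ u in Iio t, lagFun p k (t - u) * S u := by
    rw [lagProcess, ← h]
    apply setIntegral_congr_fun measurableSet_Iio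
    intro u _
    simp [sub_sub_cancel]
  rw [h2, setIntegral_congr_set Iio_ae_eq_Iic]
  have h3 : (fun u => lagFun p k (t - u) * S u)
      = fun u => ∑ i ∈ Finset.range (k+1),
          lagC p k i * ((t-u)^i * Real.exp (-(p*(t-u))) * S u) := by
    funext u
    rw [lagFun_eq, Finset.sum_mul]
    apply Finset.sum_congr rfl
    intro i _
    ring
  rw [h3, integral_finset_sum _ (fun i _ => (monomial_integrable p S i t hint).const_mul _)]
  apply Finset.sum_congr rfl
  intro i _
  rw [integral_const_mul, monomial_integral p S i t hint]

lemma lagC_zero (p : ℝ) (k : ℕ) : lagC p k 0 = Real.sqrt (2 * p) := by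
  simp [lagC]

lemma lagC_key (p : ℝ) (k m : ℕ) (hm : m < k) :
    lagC p k (m+1) * ((m+1 : ℕ) : ℝ) = -(2*p) * ∑ j ∈ Finset.Ico m k, lagC p j m := by
  have hsum : ∑ j ∈ Finset.Ico m k, lagC p j m
      = (Real.sqrt (2*p) * (-(2*p))^m / (Nat.factorial m : ℝ)) * (k.choose (m+1) : ℝ) := by
    have hIco : Finset.Ico m k = Finset.Icc m (k-1) := by
      rw [← Finset.Ico_add_one_right_eq_Icc]
      congr 1
      omega
    have hhs : ∑ j ∈ Finset.Icc m (k-1), j.choose m = k.choose (m+1) := by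
      have := Nat.sum_Icc_choose (k-1) m
      rwa [show k - 1 + 1 = k by omega] at this
    have hterm : ∀ j ∈ Finset.Ico m k, lagC p j m
        = (Real.sqrt (2*p) * (-(2*p))^m / (Nat.factorial m : ℝ)) * (j.choose m : ℝ) := by
      intro j hj
      rw [Finset.mem_Ico] at hj
      rw [lagC, Nat.choose_symm hj.1]
      ring
    rw [Finset.sum_congr rfl hterm, ← Finset.mul_sum]
    congr 1
    rw [hIco]
    exact_mod_cast congrArg (Nat.cast : ℕ → ℝ) hhs
  rw [hsum, lagC, Nat.choose_symm (by omega : m + 1 ≤ k)]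
  have hfac : ((m+1).factorial : ℝ) = ((m+1 : ℕ) : ℝ) * (m.factorial : ℝ) := by
    rw [Nat.factorial_succ]; push_cast; ring
  rw [hfac]
  have h1 : ((m+1:ℕ) : ℝ) ≠ 0 := by positivity
  have h2 : (m.factorial : ℝ) ≠ 0 := by positivity
  field_simp
  ring

/-- the Laguerre processes `X^{p,k}`, `k = 0, …, n-1`, are differentiable and
satisfy the ODE system
`d X^{p,k}_t / dt = √(2p) S_t - 2p ∑_{j=0}^{k-1} X^{p,j}_t - p X^{p,k}_t` for all `t ≥ 0`. -/
theorem laguerre_process_ode (p : ℝ) (hp : 0 < p) (n : ℕ) (hn : 1 ≤ n)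
    (S : ℝ → ℝ) (hS_cont : Continuous S)
    (hS_conv : ∀ t ≤ (0:ℝ), S t = S 0)
    (hS_bdd : ∀ a b : ℝ, ∃ C : ℝ, ∀ t ∈ Icc a b, |S t| ≤ C)
    (hS_int : ∀ k < n, ∀ t : ℝ, 0 ≤ t →
      IntegrableOn (fun v => lagFun p k v * S (t - v)) (Ioi 0)) :
    ∀ k < n, ∀ t : ℝ, 0 ≤ t →
      HasDerivAt (lagProcess p k S)
        (Real.sqrt (2 * p) * S t
          - 2 * p * ∑ j ∈ Finset.range k, lagProcess p j S t
          - p * lagProcess p k S t) t := by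
  intro k hk t ht
  have hint : ∀ s : ℝ, ∀ m : ℕ, IntegrableOn (fun u => u ^ m * Real.exp (p * u) * S u) (Iic s) :=
    fun s m => lagg_integrable p hp S hS_cont hS_conv m s
  have hG : ∀ m, HasDerivAt (lagG p S m) (t ^ m * Real.exp (p * t) * S t) t :=
    fun m => lagG_hasDerivAt p S hS_cont m t (fun s => hint s m)
  have hrep : ∀ j : ℕ, lagProcess p j S
      = fun s => ∑ i ∈ Finset.range (j+1), lagC p j i * (Real.exp (-(p*s)) * lagPsi p S i s) :=
    fun j => funext fun s => lagProcess_rep p S j s (hint s)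
  have hexp : HasDerivAt (fun s : ℝ => Real.exp (-(p*s))) (-p * Real.exp (-(p*t))) t := by
    have h1 : HasDerivAt (fun s : ℝ => -(p * s)) (-p) t := by
      simpa using ((hasDerivAt_id t).const_mul p).fun_neg
    simpa [mul_comm] using h1.exp
  have hterm : ∀ i, HasDerivAt (fun s => lagC p k i * (Real.exp (-(p*s)) * lagPsi p S i s))
      (lagC p k i * ((-p * Real.exp (-(p*t))) * lagPsi p S i t
        + Real.exp (-(p*t)) * ((i:ℝ) * lagPsi p S (i-1) t + (0:ℝ)^i * (Real.exp (p*t) * S t)))) t :=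
    fun i => (hexp.mul (lagPsi_hasDerivAt p S t hG i)).const_mul _
  have hD : HasDerivAt (lagProcess p k S)
      (∑ i ∈ Finset.range (k+1), lagC p k i * ((-p * Real.exp (-(p*t))) * lagPsi p S i t
        + Real.exp (-(p*t)) * ((i:ℝ) * lagPsi p S (i-1) t + (0:ℝ)^i * (Real.exp (p*t) * S t)))) t := by
    rw [hrep k]
    exact HasDerivAt.fun_sum (fun i _ => hterm i)
  convert hD using 1
  set E : ℝ := Real.exp (-(p*t)) with hE
  have hEE : E * Real.exp (p*t) = 1 := by
    rw [hE, ← Real.exp_add]; simp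
  have hsplit : ∀ i ∈ Finset.range (k+1),
      lagC p k i * ((-p * E) * lagPsi p S i t
        + E * ((i:ℝ) * lagPsi p S (i-1) t + (0:ℝ)^i * (Real.exp (p*t) * S t)))
      = -p * (lagC p k i * (E * lagPsi p S i t))
        + (lagC p k i * (i:ℝ)) * (E * lagPsi p S (i-1) t)
        + (0:ℝ)^i * (lagC p k i * (E * Real.exp (p*t) * S t)) := by
    intro i _
    ring
  rw [Finset.sum_congr rfl hsplit, Finset.sum_add_distrib, Finset.sum_add_distrib]
  have h3 : ∑ i ∈ Finset.range (k+1), (0:ℝ)^i * (lagC p k i * (E * Real.exp (p*t) * S t))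
      = Real.sqrt (2*p) * S t := by
    rw [Finset.sum_range_succ']
    simp only [pow_succ, mul_zero, zero_mul, Finset.sum_const_zero, zero_add, pow_zero, one_mul]
    calc lagC p k 0 * (E * Real.exp (p*t) * S t)
        = lagC p k 0 * ((E * Real.exp (p*t)) * S t) := by ring
      _ = Real.sqrt (2*p) * S t := by rw [hEE, lagC_zero]; ring
  have h1 : ∑ i ∈ Finset.range (k+1), -p * (lagC p k i * (E * lagPsi p S i t))
      = -p * lagProcess p k S t := by
    rw [← Finset.mul_sum, hrep k]
  have h2 : ∑ i ∈ Finset.range (k+1), (lagC p k i * (i:ℝ)) * (E * lagPsi p S (i-1) t)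
      = -(2*p) * ∑ j ∈ Finset.range k, lagProcess p j S t := by
    rw [Finset.sum_range_succ']
    simp only [Nat.cast_zero, mul_zero, zero_mul, add_zero, Nat.add_sub_cancel]
    have hper : ∀ m ∈ Finset.range k, (lagC p k (m+1) * ((m+1 : ℕ):ℝ)) * (E * lagPsi p S m t)
        = ∑ j ∈ Finset.Ico m k, -(2*p) * (lagC p j m * (E * lagPsi p S m t)) := by
      intro m hm
      rw [Finset.mem_range] at hm
      rw [lagC_key p k m hm, Finset.mul_sum, Finset.sum_mul]
      exact Finset.sum_congr rfl (fun j _ => by ring)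
    rw [Finset.sum_congr rfl hper]
    rw [Finset.sum_comm' (t' := Finset.range k) (s' := fun m => Finset.range (m+1))
      (by intro j i; simp only [Finset.mem_range, Finset.mem_Ico]; omega)]
    rw [Finset.mul_sum]
    apply Finset.sum_congr rfl
    intro j hj
    rw [hrep j]
    simp only
    rw [Finset.mul_sum]
  rw [h1, h2, h3]
  ring
end

section
/- For every integer n ≥ 0 and every t ≥ 0, the derivative of the Laguerre function satisfies d/dt ( e^{−t/2} P_n(t) ) = − Σ_{k=0}^{n−1} e^{−t/2} P_k(t) − (1/2) e^{−t/2} P_n(t). -/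
lemma lagPoly_eq (k : ℕ) (t : ℝ) :
    lagPoly k t = ∑ i ∈ Finset.range (k + 1),
      (k.choose i : ℝ) * (-t) ^ i / (Nat.factorial i : ℝ) := by
  unfold lagPoly
  refine Finset.sum_congr rfl fun i hi => ?_
  rw [Nat.choose_symm (Finset.mem_range_succ_iff.mp hi)]

lemma sum_lagPoly (n : ℕ) (t : ℝ) :
    ∑ k ∈ Finset.range n, lagPoly k t
      = ∑ j ∈ Finset.range n, (n.choose (j + 1) : ℝ) * (-t) ^ j / (Nat.factorial j : ℝ) := by
  induction n with
  | zero => simp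
  | succ n ih =>
    rw [Finset.sum_range_succ, ih, lagPoly_eq]
    have h1 : ∑ j ∈ Finset.range n, (n.choose (j + 1) : ℝ) * (-t) ^ j / (Nat.factorial j : ℝ)
        = ∑ j ∈ Finset.range (n + 1), (n.choose (j + 1) : ℝ) * (-t) ^ j / (Nat.factorial j : ℝ) := by
      rw [Finset.sum_range_succ, Nat.choose_succ_self]
      simp
    rw [h1, ← Finset.sum_add_distrib]
    refine Finset.sum_congr rfl fun j hj => ?_
    rw [Nat.choose_succ_succ n j]
    push_cast
    ring

lemma hasDerivAt_lagPoly (n : ℕ) (t : ℝ) :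
    HasDerivAt (lagPoly n) (-(∑ k ∈ Finset.range n, lagPoly k t)) t := by
  have h : HasDerivAt (lagPoly n)
      (∑ i ∈ Finset.range (n + 1),
        (n.choose (n - i) : ℝ) * ((i : ℝ) * (-t) ^ (i - 1) * (-1)) / (Nat.factorial i : ℝ)) t := by
    unfold lagPoly
    refine HasDerivAt.fun_sum fun i _ => ?_
    have hneg : HasDerivAt (fun s : ℝ => -s) (-1) t := (hasDerivAt_id t).neg
    exact ((hneg.pow i).const_mul ((n.choose (n - i) : ℝ))).div_const _
  convert h using 1
  rw [sum_lagPoly, Finset.sum_range_succ']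
  simp only [Nat.cast_zero, pow_zero]
  rw [← Finset.sum_neg_distrib]
  have : ((n.choose (n - 0) : ℝ) * (0 * (-t) ^ (0 - 1) * (-1)) / (Nat.factorial 0 : ℝ)) = 0 := by
    simp
  rw [this, add_zero]
  refine Finset.sum_congr rfl fun j hj => ?_
  have hj' : j < n := Finset.mem_range.mp hj
  have hch : n - (j + 1) ≤ n := Nat.sub_le _ _
  rw [Nat.choose_symm (by omega : j + 1 ≤ n)]
  simp only [Nat.add_sub_cancel, Nat.factorial_succ]
  push_cast
  have hfac : (Nat.factorial j : ℝ) ≠ 0 := Nat.cast_ne_zero.mpr (Nat.factorial_ne_zero j)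
  field_simp

/-- `d/dt (e^{-t/2} P_n(t)) = -∑_{k=0}^{n-1} e^{-t/2} P_k(t) - (1/2) e^{-t/2} P_n(t)`
for every `t ≥ 0`. -/
theorem laguerre_function_derivative (n : ℕ) (t : ℝ) (ht : 0 ≤ t) :
    HasDerivAt (fun s => Real.exp (-(s / 2)) * lagPoly n s)
      (-(∑ k ∈ Finset.range n, Real.exp (-(t / 2)) * lagPoly k t)
        - (1 / 2) * Real.exp (-(t / 2)) * lagPoly n t) t := by
  have hexp : HasDerivAt (fun s : ℝ => Real.exp (-(s / 2))) (Real.exp (-(t / 2)) * -(1 / 2)) t := by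
    have h1 : HasDerivAt (fun s : ℝ => -(s / 2)) (-(1 / 2)) t :=
      ((hasDerivAt_id t).div_const 2).neg
    simpa using h1.exp
  have h := hexp.fun_mul (hasDerivAt_lagPoly n t)
  refine h.congr_deriv ?_
  rw [← Finset.mul_sum]
  ring
end

section
/- Let p > 0, δ > 0, and let h = (1/δ) 1_{[0,δ]} be the density of the uniform weighting measure. Then its coefficients in the scaled Laguerre basis, c^{δ,p}_n = ⟨h, L^p_n⟩ = (1/δ) ∫₀^δ L^p_n(t) dt, are given explicitly by c^{δ,p}_n = (√(2p)/(δ p)) [ (1 − e^{−pδ} P_n(2pδ)) + 2 Σ_{k=1}^{n} (−1)^k (1 − e^{−pδ} P_{n−k}(2pδ)) ]. -/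
open MeasureTheory

/-- derivative of `lagPoly k` -/
noncomputable def lagPolyD (k : ℕ) (t : ℝ) : ℝ :=
  -∑ j ∈ Finset.range k, (k.choose (k - 1 - j) : ℝ) * (-t) ^ j / (Nat.factorial j : ℝ)

lemma lagPoly_zero (k : ℕ) : lagPoly k 0 = 1 := by
  unfold lagPoly
  rw [Finset.sum_eq_single 0]
  · simp
  · intro i _ hi
    simp [zero_pow hi]
  · simp

lemma hasDerivAt_lagPoly_s16 (k : ℕ) (t : ℝ) :
    HasDerivAt (lagPoly k) (lagPolyD k t) t := by
  have h : HasDerivAt (lagPoly k)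
      (∑ i ∈ Finset.range (k + 1),
        (k.choose (k - i) : ℝ) * ((i : ℝ) * (-t) ^ (i - 1) * (-1)) / (Nat.factorial i : ℝ)) t := by
    apply HasDerivAt.fun_sum
    intro i _
    exact (((hasDerivAt_id t).neg.pow i).const_mul _).div_const _
  convert h using 1
  unfold lagPolyD
  rw [Finset.sum_range_succ']
  simp only [Nat.cast_zero, zero_mul, mul_zero, zero_div, add_zero]
  rw [neg_eq_iff_eq_neg, ← Finset.sum_neg_distrib]
  apply Finset.sum_congr rfl
  intro j _
  have h1 : k - (j + 1) = k - 1 - j := by omega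
  have h2 : (Nat.factorial (j + 1) : ℝ) = (j + 1) * Nat.factorial j := by
    push_cast [Nat.factorial_succ]; ring
  rw [h1, h2]
  simp only [Nat.add_sub_cancel, Nat.cast_add, Nat.cast_one]
  have hj : (Nat.factorial j : ℝ) ≠ 0 := Nat.cast_ne_zero.mpr (Nat.factorial_ne_zero j)
  field_simp

lemma lagPolyD_succ (k : ℕ) (t : ℝ) :
    lagPolyD (k + 1) t = lagPolyD k t - lagPoly k t := by
  unfold lagPolyD lagPoly
  simp only [Nat.add_sub_cancel]
  rw [Finset.sum_range_succ (f := fun j => (((k+1).choose (k - j) : ℝ)) * (-t) ^ j / (Nat.factorial j : ℝ))]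
  rw [Finset.sum_range_succ (f := fun i => ((k.choose (k - i) : ℝ)) * (-t) ^ i / (Nat.factorial i : ℝ))]
  have key : ∀ j ∈ Finset.range k,
      (((k+1).choose (k - j) : ℝ)) * (-t) ^ j / (Nat.factorial j : ℝ)
        = ((k.choose (k - 1 - j) : ℝ)) * (-t) ^ j / (Nat.factorial j : ℝ)
          + ((k.choose (k - j) : ℝ)) * (-t) ^ j / (Nat.factorial j : ℝ) := by
    intro j hj
    rw [Finset.mem_range] at hj
    have h2 : k - j = (k - 1 - j) + 1 := by omega
    rw [h2, Nat.choose_succ_succ' k (k - 1 - j)]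
    push_cast
    ring
  rw [Finset.sum_congr rfl key, Finset.sum_add_distrib]
  simp [Nat.sub_self, Nat.choose_self]
  ring

/-- reindexing lemma -/
lemma shift_sum (g : ℕ → ℝ) (n : ℕ) :
    ∑ k ∈ Finset.Icc 1 (n + 1), (-1 : ℝ) ^ k * g ((n + 1) - k)
      = -g n - ∑ k ∈ Finset.Icc 1 n, (-1 : ℝ) ^ k * g (n - k) := by
  have hmap : Finset.Icc 1 (n + 1)
      = Finset.map ⟨fun k => k + 1, add_left_injective 1⟩ (Finset.Icc 0 n) := by
    ext x
    simp only [Finset.mem_map, Function.Embedding.coeFn_mk, Finset.mem_Icc]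
    constructor
    · rintro ⟨h1, h2⟩; exact ⟨x - 1, ⟨Nat.zero_le _, by omega⟩, by omega⟩
    · rintro ⟨a, ⟨_, ha⟩, rfl⟩; omega
  rw [hmap, Finset.sum_map]
  simp only [Function.Embedding.coeFn_mk, Nat.succ_sub_succ, pow_succ]
  have h0 : Finset.Icc 0 n = insert 0 (Finset.Icc 1 n) := by
    ext x
    simp only [Finset.mem_Icc, Finset.mem_insert]
    omega
  rw [h0, Finset.sum_insert (by simp)]
  have key : ∀ k ∈ Finset.Icc 1 n, (-1 : ℝ) ^ k * (-1) * g (n - k)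
      = -((-1 : ℝ) ^ k * g (n - k)) := fun k _ => by ring
  rw [Finset.sum_congr rfl key, Finset.sum_neg_distrib]
  simp
  ring

/-- `S n t = ∑_{k=1}^n (-1)^k P_{n-k}(t)` -/
noncomputable def lagS (n : ℕ) (t : ℝ) : ℝ :=
  ∑ k ∈ Finset.Icc 1 n, (-1 : ℝ) ^ k * lagPoly (n - k) t

noncomputable def lagSD (n : ℕ) (t : ℝ) : ℝ :=
  ∑ k ∈ Finset.Icc 1 n, (-1 : ℝ) ^ k * lagPolyD (n - k) t

lemma lagS_succ (n : ℕ) (t : ℝ) :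
    lagS (n + 1) t = -lagPoly n t - lagS n t :=
  shift_sum (fun k => lagPoly k t) n

lemma lagSD_succ (n : ℕ) (t : ℝ) :
    lagSD (n + 1) t = -lagPolyD n t - lagSD n t :=
  shift_sum (fun k => lagPolyD k t) n

lemma key_identity (n : ℕ) (t : ℝ) :
    lagS n t = lagPolyD n t + 2 * lagSD n t := by
  induction n with
  | zero => simp [lagS, lagSD, lagPolyD]
  | succ n ih =>
      rw [lagS_succ, lagSD_succ, lagPolyD_succ]
      rw [ih]
      ring

lemma hasDerivAt_lagS (n : ℕ) (t : ℝ) :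
    HasDerivAt (lagS n) (lagSD n t) t := by
  apply HasDerivAt.fun_sum
  intro k _
  exact (hasDerivAt_lagPoly_s16 _ t).const_mul _

/-- the scaled Laguerre coefficients of the uniform density `h = (1/δ) 1_{[0,δ]}`,
namely `c^{δ,p}_n = ⟨h, L^p_n⟩ = (1/δ) ∫₀^δ L^p_n(t) dt`, are given by the explicit formula
`c^{δ,p}_n = (√(2p)/(δp)) [ (1 - e^{-pδ} P_n(2pδ)) + 2 ∑_{k=1}^n (-1)^k (1 - e^{-pδ} P_{n-k}(2pδ)) ]`. -/
theorem laguerre_coeff_uniform (p δ : ℝ) (hp : 0 < p) (hδ : 0 < δ) (n : ℕ) :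
    (1 / δ) * (∫ t in (0:ℝ)..δ, lagFun p n t)
      = Real.sqrt (2 * p) / (δ * p) *
          ((1 - Real.exp (-(p * δ)) * lagPoly n (2 * p * δ))
            + 2 * ∑ k ∈ Finset.Icc 1 n,
                (-1 : ℝ) ^ k * (1 - Real.exp (-(p * δ)) * lagPoly (n - k) (2 * p * δ))) := by
  set R : ℝ → ℝ := fun x => lagPoly n x + 2 * lagS n x with hR
  set F : ℝ → ℝ := fun t => -(1 / p) * Real.exp (-(p * t)) * R (2 * p * t) with hF
  have hderiv : ∀ t : ℝ, HasDerivAt F (lagPoly n (2 * p * t) * Real.exp (-(p * t))) t := by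
    intro t
    have hexp : HasDerivAt (fun t : ℝ => Real.exp (-(p * t))) (-p * Real.exp (-(p * t))) t := by
      have := (((hasDerivAt_id t).const_mul p).neg).exp
      simpa [mul_comm] using this
    have hx : HasDerivAt (fun t : ℝ => 2 * p * t) (2 * p) t := by
      simpa using (hasDerivAt_id t).const_mul (2 * p)
    have hRx : HasDerivAt (fun t : ℝ => R (2 * p * t))
        ((lagPolyD n (2 * p * t) + 2 * lagSD n (2 * p * t)) * (2 * p)) t := by
      have hRd : HasDerivAt R (lagPolyD n (2 * p * t) + 2 * lagSD n (2 * p * t)) (2 * p * t) :=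
        (hasDerivAt_lagPoly_s16 n _).add ((hasDerivAt_lagS n _).const_mul 2)
      exact hRd.comp t hx
    have hD := ((hexp.mul hRx).const_mul (-(1 / p)))
    have hkey := key_identity n (2 * p * t)
    have hp' : p ≠ 0 := ne_of_gt hp
    have heq : -(1 / p) * (-p * Real.exp (-(p * t)) * R (2 * p * t)
          + Real.exp (-(p * t)) * ((lagPolyD n (2 * p * t) + 2 * lagSD n (2 * p * t)) * (2 * p)))
        = lagPoly n (2 * p * t) * Real.exp (-(p * t)) := by
      rw [← hkey]
      simp only [hR]
      field_simp
      ring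
    rw [heq] at hD
    exact hD.congr_deriv rfl |>.congr_of_eventuallyEq (Filter.Eventually.of_forall fun y => by simp [hF]; ring)
  have hint : (∫ t in (0:ℝ)..δ, lagPoly n (2 * p * t) * Real.exp (-(p * t))) = F δ - F 0 := by
    apply intervalIntegral.integral_eq_sub_of_hasDerivAt
    · intro t _; exact hderiv t
    · apply Continuous.intervalIntegrable
      have hcont : Continuous (lagPoly n) := by
        unfold lagPoly
        exact continuous_finset_sum _ fun i _ => by continuity
      continuity
  have hFint : (∫ t in (0:ℝ)..δ, lagFun p n t)
      = Real.sqrt (2 * p) * (F δ - F 0) := by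
    rw [← hint, ← intervalIntegral.integral_const_mul]
    apply intervalIntegral.integral_congr
    intro t _
    unfold lagFun
    ring
  rw [hFint]
  have hF0 : F 0 = -(1 / p) * (1 + 2 * ∑ k ∈ Finset.Icc 1 n, (-1 : ℝ) ^ k) := by
    simp only [hF, hR, mul_zero, neg_zero, Real.exp_zero, lagPoly_zero]
    unfold lagS
    simp [lagPoly_zero]
  have hFδ : F δ = -(1 / p) * Real.exp (-(p * δ)) *
      (lagPoly n (2 * p * δ) + 2 * ∑ k ∈ Finset.Icc 1 n, (-1 : ℝ) ^ k * lagPoly (n - k) (2 * p * δ)) := by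
    simp only [hF, hR]
    unfold lagS
    ring
  rw [hF0, hFδ]
  have hp' : p ≠ 0 := ne_of_gt hp
  have hδ' : δ ≠ 0 := ne_of_gt hδ
  have hsum : ∑ k ∈ Finset.Icc 1 n,
      (-1 : ℝ) ^ k * (1 - Real.exp (-(p * δ)) * lagPoly (n - k) (2 * p * δ))
      = (∑ k ∈ Finset.Icc 1 n, (-1 : ℝ) ^ k)
        - Real.exp (-(p * δ)) * ∑ k ∈ Finset.Icc 1 n, (-1 : ℝ) ^ k * lagPoly (n - k) (2 * p * δ) := by
    rw [Finset.mul_sum, ← Finset.sum_sub_distrib]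
    apply Finset.sum_congr rfl
    intro k _
    ring
  rw [hsum]
  field_simp
  ring
end
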